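/- Let q > 2 be a real number. For all real k, l with k + l > 0, one has (k+l)^{q-1} = |k|^{q-2}k + (q-1)|k|^{q-3}k·l + b'(k,l)|k|^{q-3}l² + b''(k,l)|l|^{q-1}, where b', b'' are functions bounded uniformly in (k,l) (depending only on q). -/

import Mathlib

/-!
Split according to whether `|k| ≤ |l|`. Near the diagonal every term of
`(k+l)^(q-1) - |k|^(q-2) k - (q-1)|k|^(q-3) k l` is `O(|l|^(q-1))`. Otherwise `k > 0`, and
homogeneity turns this remainder into `k^(q-1)` times the second-order Taylor remainder of
`(1+t)^(q-1)` at `t = l/k ∈ [-1, 1]`, which is `O(t²)`; this gives `O(k^(q-3) l²)`.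
The coefficients `b'`, `b''` are then the remainder divided by the respective weight; where a
weight vanishes the bound forces the remainder to vanish too, so the junk value `x / 0 = 0` is
harmless.
-/

open Real Set

lemma abs_sub_le_mul_abs_of_hasDerivAt_uIcc {f f' : ℝ → ℝ} {t C : ℝ}
    (hf : ∀ x ∈ uIcc 0 t, HasDerivAt f (f' x) x) (hC : ∀ x ∈ uIcc 0 t, |f' x| ≤ C) :
    |f t - f 0| ≤ C * |t| := by
  simpa using (convex_uIcc 0 t).norm_image_sub_le_of_norm_hasDerivWithin_le
    (fun x hx => (hf x hx).hasDerivWithinAt) hC left_mem_uIcc right_mem_uIcc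

lemma abs_le_abs_of_mem_uIcc_zero {x t : ℝ} (hx : x ∈ uIcc 0 t) : |x| ≤ |t| := by
  simpa using abs_sub_left_of_mem_uIcc hx

lemma rpow_le_two_rpow_abs {y : ℝ} (a : ℝ) (h₁ : 1 / 2 ≤ y) (h₂ : y ≤ 2) : y ^ a ≤ 2 ^ |a| := by
  rcases le_total 0 a with ha | ha
  · rw [abs_of_nonneg ha]
    exact rpow_le_rpow (by linarith) h₂ ha
  · calc y ^ a ≤ (1 / 2) ^ a := rpow_le_rpow_of_nonpos (by norm_num) h₁ ha
      _ = 2 ^ |a| := by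
        rw [abs_of_nonpos ha, one_div, inv_rpow zero_le_two, rpow_neg zero_le_two]

lemma abs_one_add_rpow_sub_one_le {s x : ℝ} (hx : |x| ≤ 1 / 2) :
    |(1 + x) ^ s - 1| ≤ |s| * 2 ^ |s - 1| * |x| := by
  have hmem : ∀ y ∈ uIcc 0 x, 1 / 2 ≤ 1 + y ∧ 1 + y ≤ 2 := fun y hy => by
    have := abs_le.mp ((abs_le_abs_of_mem_uIcc_zero hy).trans hx)
    constructor <;> linarith
  have hmvt := abs_sub_le_mul_abs_of_hasDerivAt_uIcc (t := x) (f := fun y => (1 + y) ^ s)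
    (f' := fun y => s * (1 + y) ^ (s - 1)) (C := |s| * 2 ^ |s - 1|) ?_ ?_
  · simpa using hmvt
  · intro y hy
    have hy₀ : 1 + y ≠ 0 := by linarith [hmem y hy]
    simpa using ((hasDerivAt_id y).const_add 1).rpow_const (p := s) (Or.inl hy₀)
  · intro y hy
    obtain ⟨h₁, h₂⟩ := hmem y hy
    rw [abs_mul, abs_of_nonneg (rpow_nonneg (by linarith) _)]
    exact mul_le_mul_of_nonneg_left (rpow_le_two_rpow_abs _ h₁ h₂) (abs_nonneg s)

lemma abs_one_add_rpow_sub_one_sub_mul_le {p t : ℝ} (ht : |t| ≤ 1 / 2) :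
    |(1 + t) ^ p - 1 - p * t| ≤ |p| * |p - 1| * 2 ^ |p - 2| * t ^ 2 := by
  have hmvt := abs_sub_le_mul_abs_of_hasDerivAt_uIcc (t := t) (f := fun y => (1 + y) ^ p - 1 - p * y)
    (f' := fun y => p * ((1 + y) ^ (p - 1) - 1)) (C := |p| * (|p - 1| * 2 ^ |p - 2| * |t|)) ?_ ?_
  · calc |(1 + t) ^ p - 1 - p * t| = |((1 + t) ^ p - 1 - p * t) - ((1 + 0) ^ p - 1 - p * 0)| := by
          simp
      _ ≤ |p| * (|p - 1| * 2 ^ |p - 2| * |t|) * |t| := hmvt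
      _ = |p| * |p - 1| * 2 ^ |p - 2| * t ^ 2 := by rw [← sq_abs t]; ring
  · intro y hy
    have hy₀ : 1 + y ≠ 0 := by
      linarith [abs_le.mp ((abs_le_abs_of_mem_uIcc_zero hy).trans ht)]
    have hd : HasDerivAt (fun y => (1 + y) ^ p - 1 - p * y) (1 * p * (1 + y) ^ (p - 1) - p * 1) y :=
      ((((hasDerivAt_id y).const_add 1).rpow_const (Or.inl hy₀)).sub_const 1).sub
        ((hasDerivAt_id y).const_mul p)
    convert hd using 1
    ring
  · intro y hy
    have hy := abs_le_abs_of_mem_uIcc_zero hy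
    rw [abs_mul]
    gcongr
    calc |(1 + y) ^ (p - 1) - 1| ≤ |p - 1| * 2 ^ |p - 1 - 1| * |y| :=
          abs_one_add_rpow_sub_one_le (hy.trans ht)
      _ ≤ |p - 1| * 2 ^ |p - 2| * |t| := by rw [show p - 1 - 1 = p - 2 by ring]; gcongr

lemma exists_abs_one_add_rpow_sub_one_sub_mul_le {p : ℝ} (hp : 0 ≤ p) :
    ∃ M, 0 ≤ M ∧ ∀ t ∈ Icc (-1 : ℝ) 1, |(1 + t) ^ p - 1 - p * t| ≤ M * t ^ 2 := by
  refine ⟨max (|p| * |p - 1| * 2 ^ |p - 2|) (4 * (2 ^ p + 1 + p)), by positivity, fun t ht => ?_⟩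
  rcases le_or_gt |t| (1 / 2) with hsmall | hlarge
  · exact (abs_one_add_rpow_sub_one_sub_mul_le hsmall).trans (by gcongr; exact le_max_left _ _)
  · have h₀ : 0 ≤ (1 + t) ^ p := rpow_nonneg (by linarith [ht.1]) _
    have h₂ : (1 + t) ^ p ≤ 2 ^ p := rpow_le_rpow (by linarith [ht.1]) (by linarith [ht.2]) hp
    have hpt : |p * t| ≤ p := by
      rw [abs_mul, abs_of_nonneg hp]
      exact mul_le_of_le_one_right hp (abs_le.mpr ht)
    have hsq : 1 ≤ 4 * t ^ 2 := by nlinarith [sq_abs t]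
    calc |(1 + t) ^ p - 1 - p * t| ≤ 2 ^ p + 1 + p := by
          rw [abs_le] at hpt ⊢; constructor <;> linarith
      _ ≤ 4 * (2 ^ p + 1 + p) * t ^ 2 := by nlinarith [rpow_nonneg zero_le_two p]
      _ ≤ _ := by gcongr; exact le_max_right _ _

lemma rpow_sub_one_mul_self {x a : ℝ} (hx : 0 ≤ x) (ha : a ≠ 0) : x ^ (a - 1) * x = x ^ a := by
  rw [← rpow_add_one' hx (by simpa using ha), sub_add_cancel]

lemma abs_div_le_of_abs_le_mul {R D M : ℝ} (hM : 0 ≤ M) (hD : 0 ≤ D) (h : |R| ≤ M * D) :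
    |R / D| ≤ M := by
  rw [abs_div, abs_of_nonneg hD]
  exact div_le_of_le_mul₀ hD hM h

lemma div_mul_cancel_of_abs_le_mul {R D M : ℝ} (h : |R| ≤ M * D) : R / D * D = R := by
  rcases eq_or_ne D 0 with rfl | hD
  · simpa [eq_comm] using h
  · exact div_mul_cancel₀ R hD

noncomputable def expansionRemainder (q k l : ℝ) : ℝ :=
  (k + l) ^ (q - 1) - |k| ^ (q - 2) * k - (q - 1) * |k| ^ (q - 3) * k * l

lemma abs_expansionRemainder_le_of_abs_le {q k l : ℝ} (hq : 2 < q) (hkl : 0 ≤ k + l)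
    (h : |k| ≤ |l|) : |expansionRemainder q k l| ≤ (2 ^ (q - 1) + q) * |l| ^ (q - 1) := by
  have h₀ : 0 ≤ (k + l) ^ (q - 1) := rpow_nonneg hkl _
  have h₁ : (k + l) ^ (q - 1) ≤ 2 ^ (q - 1) * |l| ^ (q - 1) := by
    rw [← mul_rpow zero_le_two (abs_nonneg l)]
    exact rpow_le_rpow hkl (by linarith [le_abs_self k, le_abs_self l]) (by linarith)
  have h₂ : |(|k| ^ (q - 2) * k)| ≤ |l| ^ (q - 1) := by
    rw [abs_mul, abs_of_nonneg (by positivity), show q - 2 = q - 1 - 1 by ring,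
      rpow_sub_one_mul_self (abs_nonneg k) (by linarith)]
    exact rpow_le_rpow (abs_nonneg k) h (by linarith)
  have h₃ : |(q - 1) * |k| ^ (q - 3) * k * l| ≤ (q - 1) * |l| ^ (q - 1) := by
    rw [abs_mul, abs_mul, abs_mul, abs_of_pos (by linarith : 0 < q - 1),
      abs_of_nonneg (by positivity), mul_assoc (q - 1), show q - 3 = q - 2 - 1 by ring,
      rpow_sub_one_mul_self (abs_nonneg k) (by linarith), show q - 1 = q - 2 + 1 by ring,
      rpow_add_one' (abs_nonneg l) (by linarith), mul_assoc (q - 2 + 1)]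
    gcongr
  unfold expansionRemainder
  rw [abs_le] at h₂ h₃ ⊢
  constructor <;> linarith

lemma expansionRemainder_eq_of_pos {q k l : ℝ} (hk : 0 < k) (hkl : 0 ≤ k + l) :
    expansionRemainder q k l = k ^ (q - 1) * ((1 + l / k) ^ (q - 1) - 1 - (q - 1) * (l / k)) := by
  have hlk : 0 ≤ 1 + l / k := by
    rw [← div_self hk.ne', ← add_div]; positivity
  have h₂ : k ^ (q - 2) = k ^ (q - 1) / k := by
    rw [show q - 2 = q - 1 - 1 by ring, rpow_sub_one hk.ne']
  have h₃ : k ^ (q - 3) = k ^ (q - 1) / k ^ 2 := by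
    rw [show q - 3 = q - 1 - 2 by ring, rpow_sub hk, rpow_two]
  rw [expansionRemainder, abs_of_pos hk, h₂, h₃, show k + l = k * (1 + l / k) by field_simp,
    mul_rpow hk.le hlk]
  field_simp

lemma exists_abs_expansionRemainder_le_of_abs_lt {q : ℝ} (hq : 1 ≤ q) :
    ∃ M, 0 ≤ M ∧ ∀ k l : ℝ, 0 ≤ k + l → |l| < |k| →
      |expansionRemainder q k l| ≤ M * (|k| ^ (q - 3) * l ^ 2) := by
  obtain ⟨M, hM, hTaylor⟩ := exists_abs_one_add_rpow_sub_one_sub_mul_le (p := q - 1) (by linarith)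
  refine ⟨M, hM, fun k l hkl h => ?_⟩
  have hk : 0 < k := by cases abs_cases k <;> cases abs_cases l <;> linarith
  have ht : l / k ∈ Icc (-1 : ℝ) 1 := by
    rw [mem_Icc, ← abs_le, abs_div, abs_of_pos hk, div_le_one hk]
    exact (h.trans_eq (abs_of_pos hk)).le
  have hweight : |k| ^ (q - 3) * l ^ 2 = k ^ (q - 1) * (l / k) ^ 2 := by
    rw [abs_of_pos hk, show q - 3 = q - 1 - 2 by ring, rpow_sub hk, rpow_two]
    field_simp
  rw [expansionRemainder_eq_of_pos hk hkl, hweight, abs_mul, abs_of_pos (by positivity),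
    mul_left_comm]
  exact mul_le_mul_of_nonneg_left (hTaylor _ ht) (by positivity)

/-- Elementary expansion: for `q > 2`, there are uniformly bounded `b', b''` with
`(k+l)^(q-1) = |k|^(q-2) k + (q-1)|k|^(q-3) k l + b'(k,l)|k|^(q-3) l² + b''(k,l)|l|^(q-1)`
whenever `k + l > 0`. -/
theorem elementary_expansion (q : ℝ) (hq : 2 < q) :
    ∃ C : ℝ, 0 < C ∧ ∃ b' b'' : ℝ → ℝ → ℝ,
      ∀ k l : ℝ, 0 < k + l →
        |b' k l| ≤ C ∧ |b'' k l| ≤ C ∧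
        (k + l) ^ (q - 1) =
          |k| ^ (q - 2) * k + (q - 1) * |k| ^ (q - 3) * k * l +
            b' k l * |k| ^ (q - 3) * l ^ 2 + b'' k l * |l| ^ (q - 1) := by
  obtain ⟨M, hM, hfar⟩ := exists_abs_expansionRemainder_le_of_abs_lt (q := q) (by linarith)
  have hN : 0 < 2 ^ (q - 1) + q := by positivity
  have hC : 0 < max M (2 ^ (q - 1) + q) := lt_max_of_lt_right hN
  refine ⟨_, hC,
    fun k l => if |k| ≤ |l| then 0 else expansionRemainder q k l / (|k| ^ (q - 3) * l ^ 2),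
    fun k l => if |k| ≤ |l| then expansionRemainder q k l / |l| ^ (q - 1) else 0,
    fun k l hkl => ?_⟩
  have hexp : (k + l) ^ (q - 1) = |k| ^ (q - 2) * k + (q - 1) * |k| ^ (q - 3) * k * l +
      expansionRemainder q k l := by
    rw [expansionRemainder]; ring
  dsimp only
  split_ifs with h
  · have hR := abs_expansionRemainder_le_of_abs_le hq hkl.le h
    refine ⟨by simpa using hC.le,
      (abs_div_le_of_abs_le_mul hN.le (by positivity) hR).trans (le_max_right _ _), ?_⟩
    rw [hexp]
    linear_combination -div_mul_cancel_of_abs_le_mul hR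
  · have hR := hfar k l hkl.le (not_le.mp h)
    refine ⟨(abs_div_le_of_abs_le_mul hM (by positivity) hR).trans (le_max_left _ _),
      by simpa using hC.le, ?_⟩
    rw [hexp]
    linear_combination -div_mul_cancel_of_abs_le_mul hR
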